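/- The WSP (warm spare) gate failure probability for the spare unit B with primary A, given by F_B(t) = [αλ_B(e^{−t(λ_A+αλ_B)} − 1)]/(−λ_A − αλ_B) − λ_A[−(e^{−λ_B t} − 1)(λ_A + αλ_B) + λ_B e^{−t(λ_A+αλ_B)} − λ_B] / [(λ_A + αλ_B)(λ_B − λ_A − αλ_B)], is the integral over [0,t] of the density f_B(b) = αλ_B e^{−b(λ_A+αλ_B)} + [λ_Aλ_B/(λ_B − αλ_B − λ_A)](e^{−b(λ_A+αλ_B)} − e^{−λ_B b}). -/

import Mathlib

open Real

theorem integral_exp_mul {c : ℝ} (hc : c ≠ 0) (a b : ℝ) :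
    ∫ x in a..b, exp (c * x) = (exp (c * b) - exp (c * a)) / c := by
  rw [intervalIntegral.integral_comp_mul_left exp hc, integral_exp, smul_eq_mul, inv_mul_eq_div]

theorem wsp_spare_failure_prob_general (lA lB a t : ℝ)
    (hlA : 0 < lA) (hlB : 0 < lB) (ha0 : 0 < a) :
    (∫ b in (0:ℝ)..t,
        (a * lB * exp (-b * (lA + a * lB)) +
          (lA * lB / (lB - a * lB - lA)) * (exp (-b * (lA + a * lB)) - exp (-lB * b)))) =
      (a * lB * (exp (-t * (lA + a * lB)) - 1)) / (-lA - a * lB) -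
        lA * (-(exp (-lB * t) - 1) * (lA + a * lB) + lB * exp (-t * (lA + a * lB)) - lB) /
          ((lA + a * lB) * (lB - lA - a * lB)) := by
  set k := lA + a * lB
  set C := lA * lB / (lB - a * lB - lA) with hC
  have hk0 : k ≠ 0 := by positivity
  have hdensity : (fun b => a * lB * exp (-b * k) + C * (exp (-b * k) - exp (-lB * b))) =
      fun b => (a * lB + C) * exp (-k * b) - C * exp (-lB * b) := by
    funext b
    rw [neg_mul_comm, mul_comm b]
    ring
  rw [hdensity, intervalIntegral.integral_sub, intervalIntegral.integral_const_mul,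
    intervalIntegral.integral_const_mul, integral_exp_mul (neg_ne_zero.2 hk0),
    integral_exp_mul (neg_ne_zero.2 hlB.ne'), neg_mul_comm, hC]
  · have hdiff : lB - lA - a * lB = lB - a * lB - lA := by ring
    have hnegk : -lA - a * lB = -k := by ring
    rw [hdiff, hnegk]
    simp only [mul_zero, exp_zero]
    field_simp
    ring
  all_goals exact (by fun_prop : Continuous _).intervalIntegrable _ _

theorem wsp_spare_failure_prob (lA lB a t : ℝ)
    (hlA : 0 < lA) (hlB : 0 < lB) (ha0 : 0 < a) (ha1 : a < 1)
    (hden : lB - a * lB - lA ≠ 0) (ht : 0 ≤ t) :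
    (∫ b in (0:ℝ)..t,
        (a * lB * exp (-b * (lA + a * lB)) +
          (lA * lB / (lB - a * lB - lA)) * (exp (-b * (lA + a * lB)) - exp (-lB * b)))) =
      (a * lB * (exp (-t * (lA + a * lB)) - 1)) / (-lA - a * lB) -
        lA * (-(exp (-lB * t) - 1) * (lA + a * lB) + lB * exp (-t * (lA + a * lB)) - lB) /
          ((lA + a * lB) * (lB - lA - a * lB)) :=
  wsp_spare_failure_prob_general lA lB a t hlA hlB ha0
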